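/- For every nonnegative integer k, the tree G_k has domination number γ(G_k) = 2k + 1 and exactly 5^k + 3^k minimum dominating sets, i.e., Γ(G_k) = 5^k + 3^k. -/

import Mathlib

/-- A set `D` of vertices is a dominating set if every vertex either lies in `D`
or is adjacent to a vertex of `D`. -/
def IsDominatingSet {V : Type*} (G : SimpleGraph V) (D : Finset V) : Prop :=
  ∀ v : V, v ∈ D ∨ ∃ w ∈ D, G.Adj v w

/-- The domination number: the minimum size of a dominating set. -/
noncomputable def dominationNumber {V : Type*} [Fintype V] (G : SimpleGraph V) : ℕ :=
  sInf {n | ∃ D : Finset V, IsDominatingSet G D ∧ D.card = n}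

/-- The number of minimum dominating sets. -/
noncomputable def numMinDomSets {V : Type*} [Fintype V] (G : SimpleGraph V) : ℕ :=
  Set.ncard {D : Finset V | IsDominatingSet G D ∧ D.card = dominationNumber G}

/-- The tree `G_k`: vertices `r = inl 0`, `s = inl 1`, and for each `i : Fin k` a path
`y_i x_i w_i v_i u_i = inr (i, 0), …, inr (i, 4)`; edges `r s`, `s y_i`, and the path edges. -/
def Gk (k : ℕ) : SimpleGraph (Fin 2 ⊕ (Fin k × Fin 5)) :=
  SimpleGraph.fromRel (fun a b =>
    (a = Sum.inl 0 ∧ b = Sum.inl 1) ∨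
    (∃ i : Fin k, a = Sum.inl 1 ∧ b = Sum.inr (i, 0)) ∨
    (∃ (i : Fin k) (j : Fin 4), a = Sum.inr (i, j.castSucc) ∧ b = Sum.inr (i, j.succ)))

/-!
The closed neighbourhoods of `r`, `x_i` and `u_i` are the pairwise disjoint blocks `{r, s}`,
`{y_i, x_i, w_i}` and `{v_i, u_i}`, so every dominating set contains a choice of one vertex from
each of these `2k + 1` blocks, and a minimum one is exactly such a choice. A choice dominates `G_k`
iff in every branch `y_i` is dominated (by `s`, `y_i` or `x_i`) and `w_i` is dominated (by `x_i`,
`w_i` or `v_i`). That leaves 5 admissible choices per branch when `s` is chosen and 3 when `r` is,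
hence `5^k + 3^k` minimum dominating sets.
-/

open SimpleGraph Finset

lemma IsDominatingSet.exists_mem_eq_or_adj {V : Type*} {G : SimpleGraph V} {D : Finset V}
    (hD : IsDominatingSet G D) (v : V) : ∃ w ∈ D, w = v ∨ G.Adj v w := by
  rcases hD v with h | ⟨w, hw, h⟩
  exacts [⟨v, h, .inl rfl⟩, ⟨w, hw, .inr h⟩]

lemma Nat.card_subtype_prod_pi_forall {α ι β : Type*} [Fintype α] [Finite ι] [Finite β]
    (P : α → β → Prop) :
    Nat.card {t : α × (ι → β) // ∀ i, P t.1 (t.2 i)} = ∑ a, Nat.card {b // P a b} ^ Nat.card ι := by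
  rw [Nat.card_congr ((Equiv.subtypeProdEquivSigmaSubtype
    fun (a : α) (f : ι → β) => ∀ i, P a (f i)).trans
    (Equiv.sigmaCongrRight fun _ => Equiv.subtypePiEquivPi)), Nat.card_sigma]
  simp only [Nat.card_fun]

section
variable {k : ℕ}

@[simp] lemma Gk_adj_inl_inl (a b : Fin 2) : (Gk k).Adj (.inl a) (.inl b) ↔ a ≠ b := by
  fin_cases a <;> fin_cases b <;> simp [Gk]

@[simp] lemma Gk_adj_inl_inr (a : Fin 2) (i : Fin k) (j : Fin 5) :
    (Gk k).Adj (.inl a) (.inr (i, j)) ↔ a = 1 ∧ j = 0 := by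
  simp [Gk, fromRel_adj]

@[simp] lemma Gk_adj_inr_inl (a : Fin 2) (i : Fin k) (j : Fin 5) :
    (Gk k).Adj (.inr (i, j)) (.inl a) ↔ a = 1 ∧ j = 0 := by
  rw [adj_comm, Gk_adj_inl_inr]

@[simp] lemma Gk_adj_inr_inr (i i' : Fin k) (j j' : Fin 5) :
    (Gk k).Adj (.inr (i, j)) (.inr (i', j')) ↔ i = i' ∧ (j.val + 1 = j' ∨ j'.val + 1 = j) := by
  simp only [Gk, fromRel_adj, ne_eq, Sum.inr.injEq, Prod.mk.injEq, reduceCtorEq, false_and,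
    exists_false, false_or]
  constructor
  · rintro ⟨-, ⟨i₀, j₀, ⟨rfl, rfl⟩, rfl, rfl⟩ | ⟨i₀, j₀, ⟨rfl, rfl⟩, rfl, rfl⟩⟩ <;> simp
  · rintro ⟨rfl, h | h⟩
    · exact ⟨by omega, .inl ⟨i, ⟨j, by omega⟩, ⟨rfl, Fin.ext rfl⟩, rfl, Fin.ext (by simp [h])⟩⟩
    · exact ⟨by omega, .inr ⟨i, ⟨j', by omega⟩, ⟨rfl, Fin.ext rfl⟩, rfl, Fin.ext (by simp [h])⟩⟩

/-- A choice of one vertex per block: `a : Fin 2` picks `r` or `s`, and `f i = (b, c)` picks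
the path vertex with index `b` in `{y_i, x_i, w_i}` and the one with index `3 + c` in
`{v_i, u_i}`. -/
abbrev GkChoice (k : ℕ) := Fin 2 × (Fin k → Fin 3 × Fin 2)

def branchVertex (p : Fin 3 × Fin 2) : Bool → Fin 5
  | false => Fin.castLE (by norm_num) p.1
  | true => Fin.natAdd 3 p.2

@[simp] lemma val_branchVertex_false (p : Fin 3 × Fin 2) :
    (branchVertex p false).val = p.1.val := rfl

@[simp] lemma val_branchVertex_true (p : Fin 3 × Fin 2) :
    (branchVertex p true).val = p.2.val + 3 := Nat.add_comm _ _

lemma branchVertex_injective (p : Fin 3 × Fin 2) : Function.Injective (branchVertex p) := by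
  intro b b' h
  cases b <;> cases b' <;> simp_all [Fin.ext_iff] <;> omega

def GkChoice.pick (t : GkChoice k) : Unit ⊕ (Fin k × Bool) → Fin 2 ⊕ (Fin k × Fin 5)
  | .inl _ => .inl t.1
  | .inr (i, b) => .inr (i, branchVertex (t.2 i) b)

def GkChoice.toFinset (t : GkChoice k) : Finset (Fin 2 ⊕ (Fin k × Fin 5)) :=
  univ.image t.pick

lemma GkChoice.pick_injective (t : GkChoice k) : Function.Injective t.pick := by
  rintro (_ | ⟨i, b⟩) (_ | ⟨i', b'⟩) h <;>
    simp only [pick, Sum.inr.injEq, Prod.mk.injEq, reduceCtorEq] at h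
  · rfl
  · obtain ⟨rfl, h⟩ := h
    rw [branchVertex_injective _ h]

lemma GkChoice.card_toFinset (t : GkChoice k) : t.toFinset.card = 2 * k + 1 := by
  rw [toFinset, card_image_of_injective _ t.pick_injective, card_univ, Fintype.card_sum,
    Fintype.card_unique, Fintype.card_prod, Fintype.card_fin, Fintype.card_bool]
  ring

@[simp] lemma GkChoice.inl_mem_toFinset (t : GkChoice k) (a : Fin 2) :
    .inl a ∈ t.toFinset ↔ a = t.1 := by
  simp [toFinset, pick, eq_comm]

@[simp] lemma GkChoice.inr_mem_toFinset (t : GkChoice k) (i : Fin k) (j : Fin 5) :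
    .inr (i, j) ∈ t.toFinset ↔ ∃ b, branchVertex (t.2 i) b = j := by
  simp [toFinset, pick]

lemma GkChoice.toFinset_injective : Function.Injective (toFinset (k := k)) := by
  intro t t' h
  have mem_iff v : v ∈ t.toFinset ↔ v ∈ t'.toFinset := by rw [h]
  have hr : t.1 = t'.1 := by simpa using mem_iff (.inl t.1)
  have hbranch i b : ∃ b', branchVertex (t'.2 i) b' = branchVertex (t.2 i) b := by
    simpa using mem_iff (.inr (i, branchVertex (t.2 i) b))
  refine Prod.ext hr (funext fun i => ?_)
  obtain ⟨b₀, h₀⟩ := hbranch i false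
  obtain ⟨b₁, h₁⟩ := hbranch i true
  cases b₀ <;> cases b₁ <;>
    simp only [Fin.ext_iff, val_branchVertex_false, val_branchVertex_true] at h₀ h₁ <;>
    ext <;> omega

def BranchDominated (a : Fin 2) (p : Fin 3 × Fin 2) : Prop :=
  ∀ j : Fin 5, (∃ b, branchVertex p b = j) ∨ (a = 1 ∧ j = 0) ∨
    ∃ b, j.val + 1 = branchVertex p b ∨ (branchVertex p b).val + 1 = j

instance (a : Fin 2) : DecidablePred (BranchDominated a) := fun p => by
  unfold BranchDominated; infer_instance

lemma card_branchDominated_zero : Nat.card {p // BranchDominated 0 p} = 3 := by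
  rw [Nat.card_eq_fintype_card]; decide

lemma card_branchDominated_one : Nat.card {p // BranchDominated 1 p} = 5 := by
  rw [Nat.card_eq_fintype_card]; decide

lemma card_branchDominated_gkChoice :
    Nat.card {t : GkChoice k // ∀ i, BranchDominated t.1 (t.2 i)} = 5 ^ k + 3 ^ k := by
  rw [Nat.card_subtype_prod_pi_forall, Fin.sum_univ_two, card_branchDominated_zero,
    card_branchDominated_one, Nat.card_eq_fintype_card, Fintype.card_fin, add_comm]

lemma GkChoice.isDominatingSet_toFinset_iff (t : GkChoice k) :
    IsDominatingSet (Gk k) t.toFinset ↔ ∀ i, BranchDominated t.1 (t.2 i) := by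
  simp [IsDominatingSet, Sum.exists, Sum.forall, BranchDominated, ← and_or_left, or_assoc]
  tauto

lemma IsDominatingSet.exists_inr_mem_near {D : Finset (Fin 2 ⊕ (Fin k × Fin 5))}
    (hD : IsDominatingSet (Gk k) D) (i : Fin k) {j : Fin 5} (hj : j ≠ 0) :
    ∃ j' : Fin 5, (j.val ≤ j'.val + 1 ∧ j'.val ≤ j.val + 1) ∧ .inr (i, j') ∈ D := by
  obtain ⟨_ | ⟨i', j'⟩, hw, h⟩ := hD.exists_mem_eq_or_adj (.inr (i, j))
  · simp [hj] at h
  · simp only [Sum.inr.injEq, Prod.mk.injEq, Gk_adj_inr_inr] at h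
    rcases h with ⟨rfl, rfl⟩ | ⟨rfl, h⟩
    exacts [⟨_, by omega, hw⟩, ⟨_, by omega, hw⟩]

lemma IsDominatingSet.exists_gkChoice_toFinset_subset {D : Finset (Fin 2 ⊕ (Fin k × Fin 5))}
    (hD : IsDominatingSet (Gk k) D) : ∃ t : GkChoice k, t.toFinset ⊆ D := by
  obtain ⟨a, ha⟩ : ∃ a, .inl a ∈ D := by
    obtain ⟨_ | ⟨i, j⟩, hw, h⟩ := hD.exists_mem_eq_or_adj (.inl 0)
    · exact ⟨_, hw⟩
    · simp at h
  have hbranch i : ∃ p, ∀ b, .inr (i, branchVertex p b) ∈ D := by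
    obtain ⟨j₁, hj₁, hw₁⟩ := hD.exists_inr_mem_near i (j := 1) (by decide)
    obtain ⟨j₄, hj₄, hw₄⟩ := hD.exists_inr_mem_near i (j := 4) (by decide)
    simp only [Fin.coe_ofNat_eq_mod] at hj₁ hj₄
    refine ⟨(⟨j₁, by omega⟩, ⟨j₄ - 3, by omega⟩), fun b => ?_⟩
    cases b
    · exact hw₁
    · convert hw₄ using 3
      ext; simp only [val_branchVertex_true]; omega
  choose f hf using hbranch
  refine ⟨(a, f), ?_⟩
  rw [GkChoice.toFinset, image_subset_iff]
  rintro (_ | ⟨i, b⟩) -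
  exacts [ha, hf i b]

lemma IsDominatingSet.two_mul_add_one_le_card {D : Finset (Fin 2 ⊕ (Fin k × Fin 5))}
    (hD : IsDominatingSet (Gk k) D) : 2 * k + 1 ≤ D.card := by
  obtain ⟨t, ht⟩ := hD.exists_gkChoice_toFinset_subset
  exact t.card_toFinset ▸ card_le_card ht

lemma setOf_isDominatingSet_card_eq :
    {D | IsDominatingSet (Gk k) D ∧ D.card = 2 * k + 1} =
      GkChoice.toFinset '' {t | ∀ i, BranchDominated t.1 (t.2 i)} := by
  ext D
  refine ⟨fun ⟨hD, hcard⟩ => ?_, ?_⟩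
  · obtain ⟨t, ht⟩ := hD.exists_gkChoice_toFinset_subset
    have hDt : t.toFinset = D := eq_of_subset_of_card_le ht (by rw [hcard, t.card_toFinset])
    exact ⟨t, t.isDominatingSet_toFinset_iff.1 (hDt ▸ hD), hDt⟩
  · rintro ⟨t, ht, rfl⟩
    exact ⟨t.isDominatingSet_toFinset_iff.2 ht, t.card_toFinset⟩

end

theorem Gk_dominationNumber_and_numMinDomSets (k : ℕ) :
    dominationNumber (Gk k) = 2 * k + 1 ∧ numMinDomSets (Gk k) = 5 ^ k + 3 ^ k := by
  have hγ : dominationNumber (Gk k) = 2 * k + 1 := by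
    refine IsLeast.csInf_eq ⟨?_, fun n ⟨D, hD, hn⟩ => hn ▸ hD.two_mul_add_one_le_card⟩
    obtain ⟨t, ht⟩ : ∃ t : GkChoice k, ∀ i, BranchDominated t.1 (t.2 i) :=
      ⟨(1, fun _ => (1, 0)), fun _ => show BranchDominated 1 (1, 0) by decide⟩
    exact ⟨t.toFinset, t.isDominatingSet_toFinset_iff.2 ht, t.card_toFinset⟩
  refine ⟨hγ, ?_⟩
  rw [numMinDomSets, hγ, setOf_isDominatingSet_card_eq,
    Set.ncard_image_of_injective _ GkChoice.toFinset_injective, ← Nat.card_coe_set_eq]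
  exact card_branchDominated_gkChoice
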